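/- arXiv:1607.03515 — 4 statements merged into one kernel-verified Lean document; each statement's English description precedes it below -/
import Mathlib

section
/- Let β be a Pisot number (an algebraic integer greater than 1 all of whose other Galois conjugates have modulus strictly less than 1), and let S ⊂ ℤ[β] be a finite set. Then there exists a constant c > 0 such that for any two elements y, z of the set Λ = { Σ_{i=0}^n a_i β^i : a_i ∈ S, n ∈ ℕ }, either y = z or |y − z| > c. -/
/-!
A difference `y - z` of two elements of `Λ` is `P(β)` for an integer polynomial `P` whose
coefficients are drawn from finitely many polynomials representing `S`. At a conjugate `w ≠ β`
the value `P(w)` is bounded by a geometric series, since `‖w‖ < 1`. So the differences with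
`|y - z| ≤ 1` are algebraic integers of `ℚ(β)` all of whose conjugates are uniformly bounded,
and there are only finitely many of those; a finite set avoiding `0` stays away from `0`.
-/

open Finset Polynomial IntermediateField
open scoped Pointwise

def digitExpansions {R : Type*} [Semiring R] (β : R) (S : Set R) : Set R :=
  {x | ∃ (n : ℕ) (a : ℕ → R), (∀ i, a i ∈ S) ∧ x = ∑ i ∈ range (n + 1), a i * β ^ i}

section digitExpansions

variable {F R R' : Type*} [Semiring R] [Semiring R'] [FunLike F R R'] [RingHomClass F R R']

theorem map_mem_digitExpansions (f : F) {β x : R} {S : Set R} (hx : x ∈ digitExpansions β S) :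
    f x ∈ digitExpansions (f β) (f '' S) := by
  obtain ⟨n, a, ha, rfl⟩ := hx
  exact ⟨n, f ∘ a, fun i => ⟨a i, ha i, rfl⟩, by simp [map_sum]⟩

theorem digitExpansions_subset_image (f : F) {β : R} {D : Set R} {S : Set R'}
    (hS : S ⊆ f '' D) : digitExpansions (f β) S ⊆ f '' digitExpansions β D := by
  rintro _ ⟨n, a, ha, rfl⟩
  choose d hd hfd using fun i => hS (ha i)
  exact ⟨_, ⟨n, d, hd, rfl⟩, by simp [map_sum, hfd]⟩

end digitExpansions

theorem norm_le_of_mem_digitExpansions {𝕜 : Type*} [NormedDivisionRing 𝕜] {z : 𝕜}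
    (hz : ‖z‖ < 1) {S : Set 𝕜} {M : ℝ} (hS : ∀ s ∈ S, ‖s‖ ≤ M) {x : 𝕜}
    (hx : x ∈ digitExpansions z S) : ‖x‖ ≤ M / (1 - ‖z‖) := by
  obtain ⟨n, a, ha, rfl⟩ := hx
  have hM : 0 ≤ M := (norm_nonneg _).trans (hS _ (ha 0))
  calc ‖∑ i ∈ range (n + 1), a i * z ^ i‖
      ≤ ∑ i ∈ range (n + 1), M * ‖z‖ ^ i := by
        refine (norm_sum_le _ _).trans (sum_le_sum fun i _ => ?_)
        rw [norm_mul, norm_pow]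
        exact mul_le_mul_of_nonneg_right (hS _ (ha i)) (by positivity)
    _ = M * ∑ i ∈ Ico 0 (n + 1), ‖z‖ ^ i := by rw [mul_sum, range_eq_Ico]
    _ ≤ M * (‖z‖ ^ 0 / (1 - ‖z‖)) :=
        mul_le_mul_of_nonneg_left (geom_sum_Ico_le_of_lt_one (norm_nonneg _) hz) hM
    _ = M / (1 - ‖z‖) := by rw [pow_zero, mul_one_div]

theorem exists_forall_norm_aeval_le_of_mem_digitExpansions {R : Type*} [CommSemiring R]
    [Algebra R ℂ] {Z : Set ℂ} (hZ : Z.Finite) (hZ1 : ∀ z ∈ Z, ‖z‖ < 1) {D : Set R[X]}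
    (hD : D.Finite) : ∃ C, ∀ z ∈ Z, ∀ P ∈ digitExpansions X D, ‖aeval z P‖ ≤ C := by
  have hbound : ∀ z ∈ Z, ∃ C, ∀ P ∈ digitExpansions X D, ‖aeval z P‖ ≤ C := by
    intro z hz
    obtain ⟨M, hM⟩ := ((hD.image (aeval z)).image norm).bddAbove
    refine ⟨M / (1 - ‖z‖), fun P hP => norm_le_of_mem_digitExpansions (hZ1 z hz)
      (fun s hs => hM ⟨s, hs, rfl⟩) ?_⟩
    simpa using map_mem_digitExpansions (aeval z) hP
  choose! C hC using hbound
  obtain ⟨C₀, hC₀⟩ := (hZ.image C).bddAbove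
  exact ⟨C₀, fun z hz P hP => (hC z hz P hP).trans (hC₀ ⟨z, hz, rfl⟩)⟩

theorem IsIntegral.finite_setOf_aeval_of_norm_aeval_roots_le {L : Type*} [Field L] [CharZero L]
    {β : L} (hβ : IsIntegral ℤ β) (B : ℝ) :
    {x : L | ∃ p : ℤ[X], aeval β p = x ∧
      ∀ z : ℂ, aeval z (minpoly ℤ β) = 0 → ‖aeval z p‖ ≤ B}.Finite := by
  have : FiniteDimensional ℚ ℚ⟮β⟯ := adjoin.finiteDimensional hβ.tower_top
  have : NumberField ℚ⟮β⟯ := ⟨⟩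
  set b := AdjoinSimple.gen ℚ β
  have hinj := (algebraMap ℚ⟮β⟯ L).injective
  have hb : IsIntegral ℤ b := by
    rwa [← isIntegral_algebraMap_iff hinj, AdjoinSimple.algebraMap_gen]
  have hmin : minpoly ℤ b = minpoly ℤ β := by
    rw [← minpoly.algebraMap_eq hinj, AdjoinSimple.algebraMap_gen]
  refine ((NumberField.Embeddings.finite_of_norm_le ℚ⟮β⟯ ℂ B).image (algebraMap _ L)).subset ?_
  rintro _ ⟨p, rfl, hp⟩
  refine ⟨aeval b p, ⟨adjoin_le_integralClosure hb (aeval_mem_adjoin_singleton ℤ b),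
    fun φ => ?_⟩, by rw [← aeval_algebraMap_apply, AdjoinSimple.algebraMap_gen]⟩
  have hφ (q : ℤ[X]) : φ (aeval b q) = aeval (φ b) q := (aeval_algHom_apply φ.toIntAlgHom b q).symm
  rw [hφ]
  refine hp _ ?_
  rw [← hmin, ← hφ, minpoly.aeval, map_zero]

theorem exists_pos_forall_eq_zero_or_lt_norm {E : Type*} [NormedAddCommGroup E] {A : Set E}
    (hA : {x ∈ A | ‖x‖ ≤ 1}.Finite) : ∃ c, 0 < c ∧ ∀ x ∈ A, x = 0 ∨ c < ‖x‖ := by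
  have hclosed : IsClosed ({x ∈ A | ‖x‖ ≤ 1} \ {0}) := hA.sdiff.isClosed
  obtain ⟨ε, hε, hball⟩ := Metric.isOpen_iff.mp hclosed.isOpen_compl 0 (by simp)
  refine ⟨min ε 1 / 2, by positivity, fun x hx => or_iff_not_imp_left.mpr fun hx0 => ?_⟩
  have hhalf : min ε 1 / 2 < min ε 1 := half_lt_self (by positivity)
  rcases le_or_gt ‖x‖ 1 with hx1 | hx1
  · have hεx : ε ≤ ‖x‖ := by
      by_contra! h
      exact hball (by simpa using h) ⟨⟨hx, hx1⟩, hx0⟩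
    linarith [min_le_left ε 1]
  · linarith [min_le_right ε 1]

theorem finite_setOf_mem_sub_digitExpansions_norm_le {β : ℝ} (hβint : IsIntegral ℤ β)
    (hconj : ∀ z : ℂ, aeval z (minpoly ℤ β) = 0 → z ≠ (β : ℂ) → ‖z‖ < 1) {S : Set ℝ}
    (hSfin : S.Finite) (hS : S ⊆ Algebra.adjoin ℤ {β}) :
    {x ∈ digitExpansions β S - digitExpansions β S | ‖x‖ ≤ 1}.Finite := by
  have hSrange : S ⊆ aeval (R := ℤ) β '' Set.univ := by
    rwa [Set.image_univ, ← AlgHom.coe_range, ← Algebra.adjoin_singleton_eq_range_aeval]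
  obtain ⟨D, -, hD, hDS⟩ := Set.exists_subset_image_finite_and.mp ⟨_, hSrange, hSfin, rfl⟩
  have hlift := digitExpansions_subset_image (aeval β) (β := X) hDS.le
  rw [aeval_X] at hlift
  obtain ⟨C, hC⟩ := exists_forall_norm_aeval_le_of_mem_digitExpansions
    (((minpoly ℤ β).rootSet_finite ℂ).sdiff (t := {(β : ℂ)}))
    (fun z hz => hconj z (mem_rootSet.mp hz.1).2 hz.2) hD
  refine (hβint.finite_setOf_aeval_of_norm_aeval_roots_le (max (2 * C) 1)).subset ?_
  rintro _ ⟨⟨_, hy, _, hz, rfl⟩, hle⟩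
  obtain ⟨P, hP, rfl⟩ := hlift hy
  obtain ⟨Q, hQ, rfl⟩ := hlift hz
  refine ⟨P - Q, map_sub _ _ _, fun w hw => ?_⟩
  rcases eq_or_ne w β with rfl | hwβ
  · rw [← Complex.coe_algebraMap, aeval_algebraMap_apply, Complex.coe_algebraMap,
      Complex.norm_real, map_sub]
    exact hle.trans (le_max_right _ _)
  have hroot : w ∈ (minpoly ℤ β).rootSet ℂ \ {(β : ℂ)} :=
    ⟨mem_rootSet.mpr ⟨minpoly.ne_zero hβint, hw⟩, hwβ⟩
  calc ‖aeval w (P - Q)‖ ≤ ‖aeval w P‖ + ‖aeval w Q‖ := by rw [map_sub]; exact norm_sub_le _ _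
    _ ≤ C + C := add_le_add (hC w hroot P hP) (hC w hroot Q hQ)
    _ ≤ max (2 * C) 1 := by linarith [le_max_left (2 * C) 1]

theorem pisot_sum_separation_general
    (β : ℝ) (hβint : IsIntegral ℤ β)
    (hconj : ∀ z : ℂ, Polynomial.aeval z (minpoly ℤ β) = 0 → z ≠ (β : ℂ) →
      ‖z‖ < 1)
    (S : Finset ℝ)
    (hS : (S : Set ℝ) ⊆ (Algebra.adjoin ℤ ({β} : Set ℝ) : Subalgebra ℤ ℝ)) :
    ∃ c : ℝ, 0 < c ∧
      ∀ y ∈ {x : ℝ | ∃ (n : ℕ) (a : ℕ → ℝ), (∀ i, a i ∈ S) ∧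
          x = ∑ i ∈ Finset.range (n + 1), a i * β ^ i},
      ∀ z ∈ {x : ℝ | ∃ (n : ℕ) (a : ℕ → ℝ), (∀ i, a i ∈ S) ∧
          x = ∑ i ∈ Finset.range (n + 1), a i * β ^ i},
        y = z ∨ c < |y - z| := by
  change ∃ c, 0 < c ∧ ∀ y ∈ digitExpansions β S, ∀ z ∈ digitExpansions β S, y = z ∨ c < ‖y - z‖
  obtain ⟨c, hc, hsep⟩ := exists_pos_forall_eq_zero_or_lt_norm
    (finite_setOf_mem_sub_digitExpansions_norm_le hβint hconj S.finite_toSet hS)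
  exact ⟨c, hc, fun y hy z hz => (hsep _ (Set.sub_mem_sub hy hz)).imp sub_eq_zero.mp id⟩

/-- **Separation for Pisot sums.** Let `β` be a Pisot number (a real algebraic integer
greater than 1, all of whose other conjugates, i.e. complex roots of its minimal
polynomial over `ℤ`, have modulus strictly less than 1), and let `S ⊆ ℤ[β]` be a finite
set.  Then there is `c > 0` such that any two elements `y, z` of
`Λ = { ∑_{i=0}^n a_i β^i : a_i ∈ S }` are either equal or at distance more than `c`. -/
theorem pisot_sum_separation
    (β : ℝ) (hβint : IsIntegral ℤ β) (hβgt : 1 < β)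
    (hconj : ∀ z : ℂ, Polynomial.aeval z (minpoly ℤ β) = 0 → z ≠ (β : ℂ) →
      ‖z‖ < 1)
    (S : Finset ℝ)
    (hS : (S : Set ℝ) ⊆ (Algebra.adjoin ℤ ({β} : Set ℝ) : Subalgebra ℤ ℝ)) :
    ∃ c : ℝ, 0 < c ∧
      ∀ y ∈ {x : ℝ | ∃ (n : ℕ) (a : ℕ → ℝ), (∀ i, a i ∈ S) ∧
          x = ∑ i ∈ Finset.range (n + 1), a i * β ^ i},
      ∀ z ∈ {x : ℝ | ∃ (n : ℕ) (a : ℕ → ℝ), (∀ i, a i ∈ S) ∧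
          x = ∑ i ∈ Finset.range (n + 1), a i * β ^ i},
        y = z ∨ c < |y - z| :=
  pisot_sum_separation_general β hβint hconj S hS
end

section
/- Consider the IFS {S_j(x) = x/d + j(d−1)/d : j = 0,…,k} on ℝ with k ≥ d−1 ≥ 2. For each n ≥ 1, the set of points {S_σ(0) mod 1 : σ ∈ {0,…,k}^n} ∪ {S_σ(k) mod 1 : σ ∈ {0,…,k}^n}, taken modulo 1, equals exactly { j/dⁿ : 0 ≤ j ≤ dⁿ − 1 }. -/
/-!
Over the common denominator `dⁿ`, `S_σ(0) = (d - 1) W / dⁿ` where `W = ∑ σᵢ d^(n-i)`, and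
`S_σ(k) = ((d - 1) W + k) / dⁿ`, so all these points lie on the grid modulo `1`. Conversely,
`d - 1` is a unit modulo `dⁿ`, so every `j < dⁿ` is `(d - 1) m mod dⁿ` for some `m < dⁿ`, and the
base-`d` digits of `m` form a word `σ` with letters `σᵢ ≤ d - 1 ≤ k` and `W = m`.
-/

open Finset

theorem Nat.sum_range_div_pow_mod_mul_pow (m b n : ℕ) :
    ∑ i ∈ range n, m / b ^ i % b * b ^ i = m % b ^ n := by
  induction n with
  | zero => simp [Nat.mod_one]
  | succ n ih => rw [sum_range_succ, ih, Nat.mod_pow_succ, mul_comm (b ^ n)]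

theorem Nat.coprime_sub_one_pow {d : ℕ} (hd : 1 ≤ d) (n : ℕ) : Nat.Coprime (d - 1) (d ^ n) :=
  ((Nat.coprime_self_sub_left hd).mpr (Nat.coprime_one_left d)).pow_right n

theorem Nat.exists_digits_sum_eq {d n m : ℕ} (hd : 0 < d) (hm : m < d ^ n) :
    ∃ σ : Fin n → ℕ, (∀ i, σ i < d) ∧ ∑ i, σ i * d ^ (i.rev : ℕ) = m := by
  refine ⟨fun i => m / d ^ (i.rev : ℕ) % d, fun i => Nat.mod_lt _ hd, ?_⟩
  refine (Fintype.sum_equiv Fin.revPerm _ (fun i => m / d ^ (i : ℕ) % d * d ^ (i : ℕ))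
    fun _ => rfl).trans ?_
  rw [Fin.sum_univ_eq_sum_range (fun i => m / d ^ i % d * d ^ i),
    Nat.sum_range_div_pow_mod_mul_pow, Nat.mod_eq_of_lt hm]

theorem sum_div_pow_succ {K : Type*} [Field K] {x : K} (hx : x ≠ 0) {n : ℕ} (a : Fin n → K) :
    ∑ i : Fin n, a i / x ^ ((i : ℕ) + 1) = (∑ i : Fin n, a i * x ^ (i.rev : ℕ)) / x ^ n := by
  rw [eq_div_iff (pow_ne_zero n hx), sum_mul]
  refine sum_congr rfl fun i _ => ?_
  have hpow : x ^ n = x ^ ((i : ℕ) + 1) * x ^ (i.rev : ℕ) := by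
    rw [← pow_add, Fin.val_rev]; congr 1; omega
  rw [hpow]
  field_simp

theorem AddCircle.coe_natCast_div_eq_mod (N D : ℕ) :
    (((N : ℝ) / D : ℝ) : AddCircle (1 : ℝ)) = (((N % D : ℕ) : ℝ) / D : ℝ) := by
  rcases Nat.eq_zero_or_pos D with rfl | hD
  · simp
  have hsplit : (N : ℝ) / D = ((N % D : ℕ) : ℝ) / D + ((N / D : ℕ) : ℝ) := by
    rw [div_add' _ _ _ (by positivity), ← Nat.cast_mul, ← Nat.cast_add, mul_comm,
      Nat.mod_add_div]
  rw [hsplit, AddCircle.coe_add, add_eq_left, AddCircle.coe_eq_zero_iff]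
  exact ⟨(N / D : ℕ), by rw [zsmul_one, Int.cast_natCast]⟩

theorem sum_digits_mul_sub_one_div_pow {d : ℕ} (hd : 1 ≤ d) {n : ℕ} (σ : Fin n → ℕ) (c : ℕ) :
    ∑ i : Fin n, (σ i : ℝ) * ((d : ℝ) - 1) / (d : ℝ) ^ ((i : ℕ) + 1) + c / (d : ℝ) ^ n =
      (((d - 1) * ∑ i, σ i * d ^ (i.rev : ℕ) + c : ℕ) : ℝ) / (d ^ n : ℕ) := by
  rw [sum_div_pow_succ (by positivity), ← add_div]
  push_cast [Nat.cast_sub hd, mul_sum]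
  congr 2
  exact sum_congr rfl fun i _ => by ring

theorem coe_sum_digits_mul_sub_one_div_pow {d : ℕ} (hd : 1 ≤ d) {n : ℕ} (σ : Fin n → ℕ) (c : ℕ) :
    ((∑ i : Fin n, (σ i : ℝ) * ((d : ℝ) - 1) / (d : ℝ) ^ ((i : ℕ) + 1) + c / (d : ℝ) ^ n : ℝ) :
        AddCircle (1 : ℝ)) =
      ((((d - 1) * ∑ i, σ i * d ^ (i.rev : ℕ) + c) % d ^ n : ℕ) / (d : ℝ) ^ n : ℝ) := by
  rw [sum_digits_mul_sub_one_div_pow hd, AddCircle.coe_natCast_div_eq_mod, Nat.cast_pow]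

theorem iterates_mod_one_eq_grid_general
    (d k : ℕ) (hd : 3 ≤ d) (hk : d - 1 ≤ k) (n : ℕ) :
    (fun x : ℝ => (x : AddCircle (1 : ℝ))) ''
        ({x : ℝ | ∃ σ : Fin n → Fin (k + 1),
            x = ∑ i : Fin n, (σ i : ℝ) * ((d : ℝ) - 1) / (d : ℝ) ^ ((i : ℕ) + 1)} ∪
         {x : ℝ | ∃ σ : Fin n → Fin (k + 1),
            x = (∑ i : Fin n, (σ i : ℝ) * ((d : ℝ) - 1) / (d : ℝ) ^ ((i : ℕ) + 1)) +
              (k : ℝ) / (d : ℝ) ^ n}) =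
      {x : AddCircle (1 : ℝ) | ∃ j : ℕ, j < d ^ n ∧
        x = (((j : ℝ) / (d : ℝ) ^ n : ℝ) : AddCircle (1 : ℝ))} := by
  have hpos : 0 < d ^ n := pow_pos (by omega) n
  have hS (σ : Fin n → ℕ) (c : ℕ) := coe_sum_digits_mul_sub_one_div_pow (d := d) (by omega) σ c
  ext y
  constructor
  · rintro ⟨x, ⟨σ, rfl⟩ | ⟨σ, rfl⟩, rfl⟩
    · exact ⟨_, Nat.mod_lt _ hpos,
        by simpa only [Nat.cast_zero, zero_div, add_zero] using hS (fun i => σ i) 0⟩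
    · exact ⟨_, Nat.mod_lt _ hpos, hS (fun i => σ i) k⟩
  · rintro ⟨j, hj, rfl⟩
    obtain ⟨m, hm, hmj⟩ :=
      Nat.exists_mul_mod_eq_of_coprime j (Nat.coprime_sub_one_pow (by omega) n) hpos.ne'
    obtain ⟨σ, hσd, rfl⟩ := Nat.exists_digits_sum_eq (by omega) hm
    refine ⟨_, Or.inl ⟨fun i => ⟨σ i, by have := hσd i; omega⟩, rfl⟩, ?_⟩
    simpa only [Nat.cast_zero, zero_div, add_zero, hmj, Nat.mod_eq_of_lt hj] using hS σ 0

/-- Consider the IFS `S_j(x) = x/d + j(d-1)/d`, `j = 0, …, k`, with `k ≥ d - 1 ≥ 2`.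
For each `n ≥ 1`, the images modulo `1` of the points `S_σ(0)` and `S_σ(k)`,
`σ ∈ {0,…,k}ⁿ` (where `S_σ(0) = ∑_{i=1}^n σ_i (d-1) d^{-i}` and
`S_σ(k) = S_σ(0) + k d^{-n}`), form exactly the set `{ j/dⁿ : 0 ≤ j ≤ dⁿ - 1 }`. -/
theorem iterates_mod_one_eq_grid
    (d k : ℕ) (hd : 3 ≤ d) (hk : d - 1 ≤ k) (n : ℕ) (hn : 1 ≤ n) :
    (fun x : ℝ => (x : AddCircle (1 : ℝ))) ''
        ({x : ℝ | ∃ σ : Fin n → Fin (k + 1),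
            x = ∑ i : Fin n, (σ i : ℝ) * ((d : ℝ) - 1) / (d : ℝ) ^ ((i : ℕ) + 1)} ∪
         {x : ℝ | ∃ σ : Fin n → Fin (k + 1),
            x = (∑ i : Fin n, (σ i : ℝ) * ((d : ℝ) - 1) / (d : ℝ) ^ ((i : ℕ) + 1)) +
              (k : ℝ) / (d : ℝ) ^ n}) =
      {x : AddCircle (1 : ℝ) | ∃ j : ℕ, j < d ^ n ∧
        x = (((j : ℝ) / (d : ℝ) ^ n : ℝ) : AddCircle (1 : ℝ))} :=
  iterates_mod_one_eq_grid_general d k hd hk n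
end

section
/- Let d ≥ 3, k ≥ d−1, and T(0), T(d−1) be the k×k primitive transition matrices (as defined via T(ℓ)_{ji} = p_s when s = (ℓ − (i−1) + (j−1)d)/(d−1) ∈ {0,…,k}, with all probabilities p_s > 0). Then for all indices i, j with j ≡ i (mod d−1), the (i,j) entry of (T(0)·T(d−1))^k is strictly positive. -/
open Finset

/-!
Write `M = T(0) T(d-1)` and `m = d - 1`. Reading off the entries of `T(0)` and `T(d-1)`, the
nonnegative matrix `M` has a positive diagonal and positive entries `M a (a + m)` and
`M (a + m) a`, so a walk from `i` to `j` in at most `k` steps of `±m`, padded by loops, shows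
that `(M ^ k) i j > 0` whenever `i ≡ j (mod m)`.
-/

namespace Matrix

variable {α : Type*} [Semiring α] [PartialOrder α] [IsStrictOrderedRing α]

section Mul

variable {l n o : Type*} [Fintype n] {A : Matrix l n α} {B : Matrix n o α}

theorem mul_apply_nonneg (hA : ∀ i j, 0 ≤ A i j) (hB : ∀ i j, 0 ≤ B i j) (i : l) (j : o) :
    0 ≤ (A * B) i j :=
  sum_nonneg fun c _ => mul_nonneg (hA i c) (hB c j)

theorem mul_apply_pos_of_pos (hA : ∀ i j, 0 ≤ A i j) (hB : ∀ i j, 0 ≤ B i j) {i : l} {c : n}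
    {j : o} (hAc : 0 < A i c) (hBc : 0 < B c j) : 0 < (A * B) i j :=
  (mul_pos hAc hBc).trans_le <|
    single_le_sum (f := fun x => A i x * B x j) (fun x _ => mul_nonneg (hA i x) (hB x j))
      (mem_univ c)

end Mul

theorem pow_apply_pos_of_le {n : Type*} [Fintype n] [DecidableEq n] {A : Matrix n n α}
    (hA : ∀ i j, 0 ≤ A i j) (hdiag : ∀ i, 0 < A i i) {i j : n} {r s : ℕ} (hrs : r ≤ s)
    (hr : 0 < (A ^ r) i j) : 0 < (A ^ s) i j := by
  induction s, hrs using Nat.le_induction with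
  | base => exact hr
  | succ s _ ih =>
    rw [pow_succ]
    exact mul_apply_pos_of_pos (pow_apply_nonneg hA s) hA ih (hdiag j)

section Fin

variable {k m : ℕ} {A : Matrix (Fin k) (Fin k) α}

theorem pow_apply_pos_of_eq_add_mul (hA : ∀ i j, 0 ≤ A i j)
    (hstep : ∀ a b : Fin k, (b : ℕ) = a + m → 0 < A a b) (t : ℕ) (a : Fin k) :
    ∀ b : Fin k, (b : ℕ) = a + t * m → 0 < (A ^ t) a b := by
  induction t with
  | zero =>
    intro b hb
    rw [show a = b from Fin.ext (by simpa using hb.symm), pow_zero, one_apply_eq]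
    exact zero_lt_one
  | succ t ih =>
    intro b hb
    let c : Fin k := ⟨a + t * m, by have := b.isLt; rw [hb] at this; nlinarith⟩
    rw [pow_succ]
    exact mul_apply_pos_of_pos (pow_apply_nonneg hA t) hA (ih c rfl)
      (hstep c b (by rw [hb]; simp only [c]; ring))

theorem pow_apply_pos_of_modEq (hm : 0 < m) (hA : ∀ i j, 0 ≤ A i j) (hdiag : ∀ i, 0 < A i i)
    (hstep : ∀ a b : Fin k, (b : ℕ) = a + m → 0 < A a b) {a b : Fin k} (hab : a ≤ b)
    (hmod : (a : ℕ) ≡ b [MOD m]) : 0 < (A ^ k) a b := by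
  obtain ⟨t, ht⟩ := (Nat.modEq_iff_dvd' hab).mp hmod
  have htk : t ≤ k := by
    have := b.isLt
    nlinarith [Nat.sub_le (b : ℕ) a]
  exact pow_apply_pos_of_le hA hdiag htk
    (pow_apply_pos_of_eq_add_mul hA hstep t a b (by rw [mul_comm, ← ht]; omega))

end Fin

end Matrix

theorem transition_mul_apply_pos {d k : ℕ} {T : ℕ → Matrix (Fin k) (Fin k) ℝ} (hd : 1 ≤ d)
    (hT_nonneg : ∀ ℓ a b, 0 ≤ T ℓ a b)
    (hT_pos : ∀ (ℓ : ℕ) (a b : Fin k) (s : ℕ), s ≤ k →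
      (s : ℤ) * (d - 1) = ℓ - (b : ℕ) + (a : ℕ) * d → 0 < T ℓ a b)
    {a c b : Fin k} (s₁ s₂ : ℕ) (hs₁ : s₁ ≤ k) (hs₂ : s₂ ≤ k)
    (he₁ : (s₁ : ℤ) * (d - 1) = - (c : ℕ) + (a : ℕ) * d)
    (he₂ : (s₂ : ℤ) * (d - 1) = (d - 1) - (b : ℕ) + (c : ℕ) * d) :
    0 < (T 0 * T (d - 1)) a b := by
  have hd₁ : ((d - 1 : ℕ) : ℤ) = d - 1 := by omega
  exact Matrix.mul_apply_pos_of_pos (hT_nonneg 0) (hT_nonneg (d - 1))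
    (hT_pos 0 _ _ s₁ hs₁ (by simpa using he₁)) (hT_pos (d - 1) _ _ s₂ hs₂ (by rwa [hd₁]))

theorem pow_prod_transition_pos_general
    (d k : ℕ) (hd : 3 ≤ d)
    (p : ℕ → ℝ) (hp : ∀ j ≤ k, 0 < p j)
    (T : ℕ → Matrix (Fin k) (Fin k) ℝ)
    (hT1 : ∀ ℓ : ℕ, ∀ j i : Fin k, ∀ s : ℕ, s ≤ k →
      (s : ℤ) * ((d : ℤ) - 1) = (ℓ : ℤ) - (i : ℕ) + (j : ℕ) * d → T ℓ j i = p s)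
    (hT2 : ∀ ℓ : ℕ, ∀ j i : Fin k,
      (¬ ∃ s : ℕ, s ≤ k ∧ (s : ℤ) * ((d : ℤ) - 1) = (ℓ : ℤ) - (i : ℕ) + (j : ℕ) * d) →
      T ℓ j i = 0) :
    ∀ i j : Fin k, (i : ℕ) % (d - 1) = (j : ℕ) % (d - 1) →
      0 < ((T 0 * T (d - 1)) ^ k) i j := by
  intro i j hij
  have hT_pos : ∀ (ℓ : ℕ) (a b : Fin k) (s : ℕ), s ≤ k →
      (s : ℤ) * (d - 1) = ℓ - (b : ℕ) + (a : ℕ) * d → 0 < T ℓ a b :=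
    fun ℓ a b s hs he => hT1 ℓ a b s hs he ▸ hp s hs
  have hT_nonneg : ∀ ℓ a b, 0 ≤ T ℓ a b := fun ℓ a b => by
    by_cases h : ∃ s : ℕ, s ≤ k ∧ (s : ℤ) * ((d : ℤ) - 1) = (ℓ : ℤ) - (b : ℕ) + (a : ℕ) * d
    · obtain ⟨s, hs, he⟩ := h
      exact (hT_pos ℓ a b s hs he).le
    · exact (hT2 ℓ a b h).ge
  have hd₁ : ((d - 1 : ℕ) : ℤ) = d - 1 := by omega
  have hM_pos := @transition_mul_apply_pos d k T (by omega) hT_nonneg hT_pos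
  have hM_nonneg := Matrix.mul_apply_nonneg (hT_nonneg 0) (hT_nonneg (d - 1))
  have hM_diag (a : Fin k) : 0 < (T 0 * T (d - 1)) a a :=
    hM_pos (c := a) a (a + 1) a.isLt.le a.isLt (by ring) (by push_cast; ring)
  have hM_up (a b : Fin k) (hb : (b : ℕ) = a + (d - 1)) : 0 < (T 0 * T (d - 1)) a b :=
    hM_pos (c := a) a a a.isLt.le a.isLt.le (by ring) (by rw [hb]; push_cast [hd₁]; ring)
  have hM_down (a b : Fin k) (hb : (b : ℕ) = a + (d - 1)) : 0 < (T 0 * T (d - 1)) b a :=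
    hM_pos (c := a) (a + d) (a + 1) (by omega) a.isLt
      (by rw [hb]; push_cast [hd₁]; ring) (by push_cast; ring)
  rcases le_total i j with hle | hle
  · exact Matrix.pow_apply_pos_of_modEq (by omega) hM_nonneg hM_diag hM_up hle hij
  · have := Matrix.pow_apply_pos_of_modEq (A := (T 0 * T (d - 1)).transpose) (by omega)
      (fun a b => hM_nonneg b a) hM_diag hM_down hle hij.symm
    rwa [← Matrix.transpose_pow, Matrix.transpose_apply] at this

/-- Let `d ≥ 3`, `k ≥ d - 1`, and let `T(0)` and `T(d-1)` be the `k × k` primitive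
transition matrices given by `T(ℓ)_{ji} = p_s` when `s = (ℓ - (i-1) + (j-1)d)/(d-1)`
is an integer in `{0, …, k}` (and `0` otherwise), where all `p_s > 0`.  Then for all
indices `i, j` with `j ≡ i (mod d-1)`, the `(i,j)` entry of `(T(0)·T(d-1))^k` is
strictly positive. -/
theorem pow_prod_transition_pos
    (d k : ℕ) (hd : 3 ≤ d) (hk : d - 1 ≤ k)
    (p : ℕ → ℝ) (hp : ∀ j ≤ k, 0 < p j)
    (T : ℕ → Matrix (Fin k) (Fin k) ℝ)
    (hT1 : ∀ ℓ : ℕ, ∀ j i : Fin k, ∀ s : ℕ, s ≤ k →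
      (s : ℤ) * ((d : ℤ) - 1) = (ℓ : ℤ) - (i : ℕ) + (j : ℕ) * d → T ℓ j i = p s)
    (hT2 : ∀ ℓ : ℕ, ∀ j i : Fin k,
      (¬ ∃ s : ℕ, s ≤ k ∧ (s : ℤ) * ((d : ℤ) - 1) = (ℓ : ℤ) - (i : ℕ) + (j : ℕ) * d) →
      T ℓ j i = 0) :
    ∀ i j : Fin k, (i : ℕ) % (d - 1) = (j : ℕ) % (d - 1) →
      0 < ((T 0 * T (d - 1)) ^ k) i j :=
  pow_prod_transition_pos_general d k hd p hp T hT1 hT2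
end

section
/- Let P be a square matrix with all entries strictly positive. Then there exists a constant C > 0 such that for all n ≥ 1, sp(P)ⁿ ≤ ‖Pⁿ‖ ≤ C·sp(P)ⁿ, where ‖M‖ is the sum of the entries of M and sp is the spectral radius. -/
open Finset

/-- The entrywise `L¹` norm of a matrix: the sum of absolute values of the entries. -/
noncomputable def l1Norm {R C : Type*} [Fintype R] [Fintype C] (M : Matrix R C ℝ) : ℝ :=
  ∑ x, ∑ y, |M x y|

/-- The spectral radius of a real square matrix: the supremum of the moduli of its
complex eigenvalues. -/
noncomputable def specRad {n : Type*} [Fintype n] [DecidableEq n]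
    (M : Matrix n n ℝ) : ℝ :=
  sSup ((fun z : ℂ => ‖z‖) '' spectrum ℂ (M.map ((↑) : ℝ → ℂ)))

/-!
Write `ρ = sp(P)` and `aₙ = ‖Pⁿ‖`. The entrywise `L¹` norm dominates the `ℓ^∞` operator norm,
which in turn dominates `ρⁿ = sp(Pⁿ)`; this is the lower bound.

For the upper bound, let `u = min P / max P`. Since `Pⁿ = Pⁿ⁻¹ P`, any two columns of `Pⁿ`
agree up to the factor `u`, which makes `bₙ = (u / m) aₙ` supermultiplicative:
`b_p b_q ≤ b_{p+q}`. Hence `bₙᵏ ≤ b_{nk}`, while Gelfand's formula gives `b_{nk} ≤ c r^{nk}`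
for every `r > ρ`. Letting `k → ∞` and then `r → ρ` yields `bₙ ≤ ρⁿ`, i.e. `aₙ ≤ (m / u) ρⁿ`.
-/

open Filter Topology

theorem le_of_eventually_pow_le_mul_pow {x y c : ℝ} (hy : 0 < y)
    (h : ∀ᶠ k in atTop, x ^ k ≤ c * y ^ k) : x ≤ y := by
  by_contra! hyx
  have hgrow : Tendsto (fun k : ℕ => (x / y) ^ k) atTop atTop :=
    tendsto_pow_atTop_atTop_of_one_lt ((one_lt_div hy).2 hyx)
  obtain ⟨k, hk, hck⟩ := (h.and (hgrow.eventually_gt_atTop c)).exists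
  rw [div_pow, lt_div_iff₀ (pow_pos hy k)] at hck
  linarith

section Supermultiplicative

variable {b : ℕ → ℝ} (hb : ∀ n, 0 ≤ b n)
  (hsup : ∀ p q, 1 ≤ p → 1 ≤ q → b p * b q ≤ b (p + q))
include hb hsup

theorem pow_le_of_supermultiplicative {n k : ℕ} (hn : 1 ≤ n) (hk : 1 ≤ k) :
    b n ^ k ≤ b (n * k) := by
  induction k, hk using Nat.le_induction with
  | base => simp
  | succ k hk ih =>
    calc b n ^ (k + 1) = b n ^ k * b n := pow_succ _ _
      _ ≤ b (n * k) * b n := by gcongr; exact hb n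
      _ ≤ b (n * k + n) := hsup _ _ (Nat.one_le_iff_ne_zero.2 (by positivity)) hn
      _ = b (n * (k + 1)) := by ring_nf

theorem le_pow_of_supermultiplicative {ρ : ℝ} (hρ : 0 ≤ ρ)
    (hgrowth : ∀ r, ρ < r → ∃ c, ∀ᶠ j in atTop, b j ≤ c * r ^ j) {n : ℕ} (hn : 1 ≤ n) :
    b n ≤ ρ ^ n := by
  have hr : ∀ r, ρ < r → b n ≤ r ^ n := fun r hρr => by
    obtain ⟨c, hc⟩ := hgrowth r hρr
    refine le_of_eventually_pow_le_mul_pow (c := c) (pow_pos (hρ.trans_lt hρr) n) ?_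
    filter_upwards [(tendsto_id.const_mul_atTop' hn).eventually hc,
      eventually_ge_atTop 1] with k hk hk1
    rw [← pow_mul]
    exact (pow_le_of_supermultiplicative hb hsup hn hk1).trans hk
  exact ge_of_tendsto ((continuous_pow n).tendsto ρ |>.mono_left
    (nhdsWithin_le_nhds (s := Set.Ioi ρ))) (eventually_nhdsWithin_of_forall hr)

end Supermultiplicative

namespace spectrum

theorem toReal_spectralRadius_pow_le_norm_pow {𝕜 A : Type*} [NormedField 𝕜] [NormedRing A]
    [NormedAlgebra 𝕜 A] [CompleteSpace A] [NormOneClass A] (a : A) {n : ℕ} (hn : n ≠ 0) :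
    (spectralRadius 𝕜 a).toReal ^ n ≤ ‖a ^ n‖ := by
  rw [← ENNReal.toReal_pow, ← coe_nnnorm, ← ENNReal.coe_toReal]
  exact ENNReal.toReal_mono ENNReal.coe_ne_top
    ((spectralRadius_pow_le a n hn).trans (spectralRadius_le_nnnorm (a ^ n)))

theorem eventually_norm_pow_le_of_toReal_spectralRadius_lt {A : Type*} [NormedRing A]
    [NormedAlgebra ℂ A] [CompleteSpace A] [NormOneClass A] (a : A) {r : ℝ}
    (hr : (spectralRadius ℂ a).toReal < r) : ∀ᶠ n in atTop, ‖a ^ n‖ ≤ r ^ n := by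
  have hfin : spectralRadius ℂ a ≠ ⊤ :=
    ne_top_of_le_ne_top ENNReal.coe_ne_top (spectralRadius_le_nnnorm a)
  have hlt : spectralRadius ℂ a < ENNReal.ofReal r := by
    rwa [← ENNReal.ofReal_toReal hfin,
      ENNReal.ofReal_lt_ofReal_iff_of_nonneg ENNReal.toReal_nonneg]
  have hr0 : 0 ≤ r := ENNReal.toReal_nonneg.trans hr.le
  filter_upwards [(pow_norm_pow_one_div_tendsto_nhds_spectralRadius a).eventually
    (gt_mem_nhds hlt), eventually_ge_atTop 1] with n hn hn1
  rw [ENNReal.ofReal_lt_ofReal_iff_of_nonneg (by positivity), one_div,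
    Real.rpow_inv_lt_iff_of_pos (norm_nonneg _) hr0 (by positivity), Real.rpow_natCast] at hn
  exact hn.le

end spectrum

namespace Matrix

theorem exists_pos_mul_le_apply {m n : Type*} [Finite m] [Nonempty m] [Finite n] [Nonempty n]
    {P : Matrix m n ℝ} (hP : ∀ i j, 0 < P i j) : ∃ u > 0, ∀ i j i' j', u * P i' j' ≤ P i j := by
  obtain ⟨lo, hlo⟩ := Finite.exists_min fun ij : m × n => P ij.1 ij.2
  obtain ⟨hi, hhi⟩ := Finite.exists_max fun ij : m × n => P ij.1 ij.2
  have hu : 0 < P lo.1 lo.2 / P hi.1 hi.2 := div_pos (hP _ _) (hP _ _)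
  refine ⟨_, hu, fun i j i' j' => ?_⟩
  calc P lo.1 lo.2 / P hi.1 hi.2 * P i' j' ≤ P lo.1 lo.2 / P hi.1 hi.2 * P hi.1 hi.2 :=
        mul_le_mul_of_nonneg_left (hhi (i', j')) hu.le
    _ = P lo.1 lo.2 := div_mul_cancel₀ _ (hP _ _).ne'
    _ ≤ P i j := hlo (i, j)

variable {l m n α : Type*} [Fintype m]

section LinftyOp

attribute [local instance] Matrix.linftyOpSeminormedAddCommGroup

variable [SeminormedAddCommGroup α] [Fintype n]

theorem linfty_opNNNorm_le_sum_nnnorm (A : Matrix m n α) : ‖A‖₊ ≤ ∑ i, ∑ j, ‖A i j‖₊ := by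
  rw [linfty_opNNNorm_def]
  exact Finset.sup_le fun i hi =>
    single_le_sum (f := fun i => ∑ j, ‖A i j‖₊) (fun _ _ => zero_le) hi

theorem sum_nnnorm_le_card_mul_linfty_opNNNorm (A : Matrix m n α) :
    ∑ i, ∑ j, ‖A i j‖₊ ≤ Fintype.card m * ‖A‖₊ := by
  rw [linfty_opNNNorm_def, ← nsmul_eq_mul]
  exact sum_le_card_nsmul _ _ _ fun i hi => le_sup (f := fun i => ∑ j, ‖A i j‖₊) hi

end LinftyOp

theorem sum_sum_mul_apply [Fintype l] [Fintype n] (A : Matrix l m ℝ) (B : Matrix m n ℝ) :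
    ∑ i, ∑ j, (A * B) i j = ∑ k, (∑ i, A i k) * ∑ j, B k j := by
  simp only [mul_apply, sum_mul_sum]
  calc ∑ i, ∑ j, ∑ k, A i k * B k j = ∑ i, ∑ k, ∑ j, A i k * B k j :=
        sum_congr rfl fun _ _ => sum_comm
    _ = _ := sum_comm

theorem mul_mul_apply_le_mul_apply {A : Matrix l m ℝ} {B : Matrix m n ℝ} {u : ℝ}
    (hA : ∀ i k, 0 ≤ A i k) (hB : ∀ k j j', u * B k j' ≤ B k j) (i : l) (j j' : n) :
    u * (A * B) i j' ≤ (A * B) i j := by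
  simp only [mul_apply, mul_sum]
  exact sum_le_sum fun k _ => by
    rw [mul_left_comm]
    exact mul_le_mul_of_nonneg_left (hB k j j') (hA i k)

theorem mul_pow_apply_le_pow_apply [DecidableEq m] {P : Matrix m m ℝ} {u : ℝ}
    (hP : ∀ i j, 0 ≤ P i j) (hPu : ∀ i j i' j', u * P i' j' ≤ P i j) {p : ℕ} (hp : p ≠ 0)
    (i k k' : m) : u * (P ^ p) i k' ≤ (P ^ p) i k := by
  obtain ⟨q, rfl⟩ := Nat.exists_eq_succ_of_ne_zero hp
  rw [pow_succ]
  exact mul_mul_apply_le_mul_apply (pow_apply_nonneg hP q) (fun l _ _ => hPu l _ l _) i k k'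

theorem map_ofReal_pow [DecidableEq m] (M : Matrix m m ℝ) (n : ℕ) :
    M.map ((↑) : ℝ → ℂ) ^ n = (M ^ n).map ((↑) : ℝ → ℂ) :=
  (M.map_pow Complex.ofRealHom n).symm

end Matrix

section L1Norm

variable {l m n : Type*} [Fintype m] [Fintype n]

theorem l1Norm_nonneg (M : Matrix m n ℝ) : 0 ≤ l1Norm M :=
  sum_nonneg fun _ _ => sum_nonneg fun _ _ => abs_nonneg _

theorem l1Norm_of_nonneg {M : Matrix m n ℝ} (hM : ∀ i j, 0 ≤ M i j) :
    l1Norm M = ∑ i, ∑ j, M i j := by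
  simp only [l1Norm, abs_of_nonneg (hM _ _)]

theorem mul_l1Norm_mul_l1Norm_le [Fintype l] {A : Matrix l m ℝ} {B : Matrix m n ℝ} {u : ℝ}
    (hA : ∀ i k, 0 ≤ A i k) (hB : ∀ k j, 0 ≤ B k j) (hAu : ∀ i k k', u * A i k' ≤ A i k) :
    u * l1Norm A * l1Norm B ≤ Fintype.card m * l1Norm (A * B) := by
  have hAB : ∀ i j, 0 ≤ (A * B) i j := fun i j =>
    sum_nonneg fun k _ => mul_nonneg (hA i k) (hB k j)
  have hcol : ∀ k, u * l1Norm A ≤ Fintype.card m * ∑ i, A i k := fun k =>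
    calc u * l1Norm A = ∑ k', ∑ i, u * A i k' := by
          rw [l1Norm_of_nonneg hA, sum_comm, mul_sum]
          simp only [mul_sum]
      _ ≤ ∑ _k' : m, ∑ i, A i k := sum_le_sum fun k' _ => sum_le_sum fun i _ => hAu i k k'
      _ = Fintype.card m * ∑ i, A i k := by simp
  rw [l1Norm_of_nonneg hB, l1Norm_of_nonneg hAB, Matrix.sum_sum_mul_apply, mul_sum, mul_sum]
  exact sum_le_sum fun k _ => by
    rw [← mul_assoc]
    exact mul_le_mul_of_nonneg_right (hcol k) (sum_nonneg fun j _ => hB k j)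

theorem l1Norm_eq_sum_nnnorm_map_ofReal (M : Matrix m n ℝ) :
    l1Norm M = ((∑ i, ∑ j, ‖M.map ((↑) : ℝ → ℂ) i j‖₊ : NNReal) : ℝ) := by
  simp [l1Norm]

attribute [local instance] Matrix.linftyOpSeminormedAddCommGroup

theorem norm_map_ofReal_le_l1Norm (M : Matrix m n ℝ) : ‖M.map ((↑) : ℝ → ℂ)‖ ≤ l1Norm M := by
  rw [l1Norm_eq_sum_nnnorm_map_ofReal, ← coe_nnnorm]
  exact_mod_cast Matrix.linfty_opNNNorm_le_sum_nnnorm _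

theorem l1Norm_le_card_mul_norm_map_ofReal (M : Matrix m n ℝ) :
    l1Norm M ≤ Fintype.card m * ‖M.map ((↑) : ℝ → ℂ)‖ := by
  rw [l1Norm_eq_sum_nnnorm_map_ofReal, ← coe_nnnorm]
  exact_mod_cast Matrix.sum_nnnorm_le_card_mul_linfty_opNNNorm _

end L1Norm

section SpecRad

attribute [local instance] Matrix.linftyOpNormedRing Matrix.linftyOpNormedAlgebra

variable {m : Type*} [Fintype m] [DecidableEq m] [Nonempty m]

theorem specRad_eq_toReal_spectralRadius (M : Matrix m m ℝ) :
    specRad M = (spectralRadius ℂ (M.map ((↑) : ℝ → ℂ))).toReal := by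
  obtain ⟨z, hz, hzr⟩ := spectrum.exists_nnnorm_eq_spectralRadius (M.map ((↑) : ℝ → ℂ))
  rw [← hzr, ENNReal.coe_toReal, coe_nnnorm, specRad]
  refine IsGreatest.csSup_eq ⟨⟨z, hz, rfl⟩, ?_⟩
  rintro _ ⟨w, hw, rfl⟩
  have : (‖w‖₊ : ENNReal) ≤ ‖z‖₊ := hzr ▸ le_iSup₂ (α := ENNReal) w hw
  exact_mod_cast this

theorem specRad_nonneg (M : Matrix m m ℝ) : 0 ≤ specRad M :=
  specRad_eq_toReal_spectralRadius M ▸ ENNReal.toReal_nonneg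

theorem specRad_pow_le_l1Norm_pow (M : Matrix m m ℝ) {n : ℕ} (hn : n ≠ 0) :
    specRad M ^ n ≤ l1Norm (M ^ n) := by
  rw [specRad_eq_toReal_spectralRadius]
  exact (spectrum.toReal_spectralRadius_pow_le_norm_pow _ hn).trans
    (M.map_ofReal_pow n ▸ norm_map_ofReal_le_l1Norm _)

theorem eventually_l1Norm_pow_le (M : Matrix m m ℝ) {r : ℝ} (hr : specRad M < r) :
    ∀ᶠ n in atTop, l1Norm (M ^ n) ≤ Fintype.card m * r ^ n := by
  rw [specRad_eq_toReal_spectralRadius] at hr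
  filter_upwards [spectrum.eventually_norm_pow_le_of_toReal_spectralRadius_lt _ hr] with n hn
  rw [Matrix.map_ofReal_pow] at hn
  exact (l1Norm_le_card_mul_norm_map_ofReal _).trans (by gcongr)

theorem l1Norm_pow_le_card_div_mul_specRad_pow {P : Matrix m m ℝ} {u : ℝ} (hu : 0 < u)
    (hP : ∀ i j, 0 ≤ P i j) (hPu : ∀ i j i' j', u * P i' j' ≤ P i j) {n : ℕ} (hn : 1 ≤ n) :
    l1Norm (P ^ n) ≤ Fintype.card m / u * specRad P ^ n := by
  have hcard : (0 : ℝ) < Fintype.card m := by exact_mod_cast Fintype.card_pos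
  set ε : ℝ := u / Fintype.card m
  have hε : 0 < ε := by positivity
  have hsup : ∀ p q, 1 ≤ p → 1 ≤ q →
      ε * l1Norm (P ^ p) * (ε * l1Norm (P ^ q)) ≤ ε * l1Norm (P ^ (p + q)) := by
    intro p q hp _
    have := mul_l1Norm_mul_l1Norm_le (Matrix.pow_apply_nonneg hP p)
      (Matrix.pow_apply_nonneg hP q) (Matrix.mul_pow_apply_le_pow_apply hP hPu (by omega))
    rw [pow_add]
    calc ε * l1Norm (P ^ p) * (ε * l1Norm (P ^ q))
        = ε / Fintype.card m * (u * l1Norm (P ^ p) * l1Norm (P ^ q)) := by ring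
      _ ≤ ε / Fintype.card m * (Fintype.card m * l1Norm (P ^ p * P ^ q)) := by gcongr
      _ = ε * l1Norm (P ^ p * P ^ q) := by field_simp
  have hgrowth : ∀ r, specRad P < r → ∃ c, ∀ᶠ j in atTop, ε * l1Norm (P ^ j) ≤ c * r ^ j :=
    fun r hr => ⟨ε * Fintype.card m, (eventually_l1Norm_pow_le P hr).mono fun j hj => by
      rw [mul_assoc]; gcongr⟩
  calc l1Norm (P ^ n) = ε⁻¹ * (ε * l1Norm (P ^ n)) := (inv_mul_cancel_left₀ hε.ne' _).symm
    _ ≤ ε⁻¹ * specRad P ^ n := by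
      gcongr
      exact le_pow_of_supermultiplicative (fun j => mul_nonneg hε.le (l1Norm_nonneg _)) hsup
        (specRad_nonneg P) hgrowth hn
    _ = Fintype.card m / u * specRad P ^ n := by rw [inv_div]

end SpecRad

/-- Let `P` be a square matrix with all entries strictly positive.  Then there is a
constant `C > 0` such that for all `n ≥ 1`,
`sp(P)ⁿ ≤ ‖Pⁿ‖ ≤ C · sp(P)ⁿ`, where `‖M‖` is the sum of the entries of `M` and `sp`
is the spectral radius. -/
theorem l1_norm_pow_comparable_spectral_radius
    {m : Type*} [Fintype m] [DecidableEq m] [Nonempty m]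
    (P : Matrix m m ℝ) (hP : ∀ i j, 0 < P i j) :
    ∃ C : ℝ, 0 < C ∧ ∀ n : ℕ, 1 ≤ n →
      specRad P ^ n ≤ l1Norm (P ^ n) ∧ l1Norm (P ^ n) ≤ C * specRad P ^ n := by
  obtain ⟨u, hu, hPu⟩ := Matrix.exists_pos_mul_le_apply hP
  have hcard : (0 : ℝ) < Fintype.card m := by exact_mod_cast Fintype.card_pos
  exact ⟨Fintype.card m / u, by positivity, fun n hn =>
    ⟨specRad_pow_le_l1Norm_pow P (by omega),
      l1Norm_pow_le_card_div_mul_specRad_pow hu (fun i j => (hP i j).le) hPu hn⟩⟩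
end
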